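/- Let r ≥ 1 be an integer. The bilinear pairing (X, Y) ↦ Tr(XY) between the centralizer of L₂, namely {X ∈ M_r(ℂ) : X L₂ = L₂ X}, and the centralizer of f, namely {Y ∈ M_r(ℂ) : Y f = f Y}, is nondegenerate. Consequently, there exists a unique family γ₁,…,γ_r of matrices commuting with f such that Tr(γ_i L_j) = δ_{ij} for all 1 ≤ i,j ≤ r, and γ₁,…,γ_r form a basis of the centralizer of f. -/
import Mathlib


open Matrix

/-- The regular nilpotent element `L₂ = Σ_{i=1}^{r−1} ε_{i,i+1}` (0-based indexing). -/
noncomputable def L2Mat (r : ℕ) : Matrix (Fin r) (Fin r) ℂ :=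
  Matrix.of fun a b => if (a : ℕ) + 1 = (b : ℕ) then 1 else 0

/-- The nilpotent element `f = Σ_{i=1}^{r−1} i(r−i) ε_{i+1,i}`. -/
noncomputable def fMat (r : ℕ) : Matrix (Fin r) (Fin r) ℂ :=
  Matrix.of fun a b =>
    if (b : ℕ) + 1 = (a : ℕ) then (((b : ℕ) : ℂ) + 1) * ((r : ℂ) - (((b : ℕ) : ℂ) + 1)) else 0

/-- `L_i = Σ_{k=1}^{r−i+1} ε_{k,i−1+k}` (1-based `i`). -/
noncomputable def LMat (r i : ℕ) : Matrix (Fin r) (Fin r) ℂ :=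
  Matrix.of fun a b => if (b : ℕ) = (a : ℕ) + (i - 1) then 1 else 0


open Matrix Finset

namespace TP

/-- subdiagonal weight -/
noncomputable def dC (r b : ℕ) : ℂ := ((b:ℂ)+1) * ((r:ℂ) - ((b:ℂ)+1))
noncomputable def dR (r b : ℕ) : ℝ := ((b:ℝ)+1) * ((r:ℝ) - ((b:ℝ)+1))
noncomputable def gC (r k b : ℕ) : ℂ := ∏ j ∈ Finset.range b, (dC r (j+k) / dC r j)
noncomputable def gR (r k b : ℕ) : ℝ := ∏ j ∈ Finset.range b, (dR r (j+k) / dR r j)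
noncomputable def SC (r k : ℕ) : ℂ := ∑ b ∈ Finset.range (r-k), gC r k b

lemma dC_cast (r b : ℕ) : dC r b = ((dR r b : ℝ) : ℂ) := by
  simp [dC, dR]

lemma gC_cast (r k b : ℕ) : gC r k b = ((gR r k b : ℝ) : ℂ) := by
  simp [gC, gR, dC_cast]

lemma dC_ne_zero {r b : ℕ} (h : b + 1 ≠ r) : dC r b ≠ 0 := by
  apply mul_ne_zero
  · have : ((b:ℂ)+1) = ((b+1 : ℕ) : ℂ) := by push_cast; ring
    rw [this]; exact_mod_cast Nat.succ_ne_zero b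
  · intro hc
    apply h
    have h2 : (r:ℂ) = ((b+1 : ℕ) : ℂ) := by
      have := sub_eq_zero.mp hc
      push_cast
      linear_combination this
    exact_mod_cast h2.symm

lemma dC_eq_zero {r b : ℕ} (h : b + 1 = r) : dC r b = 0 := by
  subst h; simp [dC]

lemma dR_pos {r b : ℕ} (h : b + 1 < r) : 0 < dR r b := by
  apply mul_pos
  · positivity
  · have : ((b:ℝ)+1) < (r:ℝ) := by exact_mod_cast h
    linarith

lemma gR_pos {r k b : ℕ} (h : b + k < r) : 0 < gR r k b := by
  apply Finset.prod_pos
  intro j hj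
  rw [Finset.mem_range] at hj
  exact div_pos (dR_pos (by omega)) (dR_pos (by omega))

lemma SC_ne_zero {r k : ℕ} (h : k < r) : SC r k ≠ 0 := by
  have : SC r k = (((∑ b ∈ Finset.range (r-k), gR r k b : ℝ)) : ℂ) := by
    simp [SC, gC_cast]
  rw [this]
  have hpos : 0 < ∑ b ∈ Finset.range (r-k), gR r k b := by
    apply Finset.sum_pos
    · intro b hb; rw [Finset.mem_range] at hb; exact gR_pos (by omega)
    · exact ⟨0, Finset.mem_range.mpr (by omega)⟩
  exact_mod_cast ne_of_gt hpos

lemma gC_succ (r k b : ℕ) : gC r k (b+1) = gC r k b * (dC r (b+k) / dC r b) := by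
  unfold gC
  rw [Finset.prod_range_succ]

variable {r : ℕ}

/-- extension of a matrix by zero to ℕ-indices -/
noncomputable def extM (M : Matrix (Fin r) (Fin r) ℂ) (a b : ℕ) : ℂ :=
  if h : a < r ∧ b < r then M ⟨a, h.1⟩ ⟨b, h.2⟩ else 0

lemma extM_apply (M : Matrix (Fin r) (Fin r) ℂ) {a b : ℕ} (h1 : a < r) (h2 : b < r) :
    extM M a b = M ⟨a, h1⟩ ⟨b, h2⟩ := dif_pos ⟨h1, h2⟩

lemma extM_fin (M : Matrix (Fin r) (Fin r) ℂ) (i j : Fin r) : extM M i j = M i j := by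
  rw [extM_apply M i.2 j.2]

lemma extM_zero_left (M : Matrix (Fin r) (Fin r) ℂ) {a : ℕ} (b : ℕ) (h : r ≤ a) :
    extM M a b = 0 := dif_neg (by omega)

lemma extM_zero_right (M : Matrix (Fin r) (Fin r) ℂ) (a : ℕ) {b : ℕ} (h : r ≤ b) :
    extM M a b = 0 := dif_neg (by omega)

/-- lower shift by `k` with weights indexed by column -/
noncomputable def SL (r k : ℕ) (w : ℕ → ℂ) : Matrix (Fin r) (Fin r) ℂ :=
  Matrix.of fun a b => if (a:ℕ) = (b:ℕ) + k then w (b:ℕ) else 0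

/-- upper shift by `k` with weights indexed by row -/
noncomputable def SU (r k : ℕ) (w : ℕ → ℂ) : Matrix (Fin r) (Fin r) ℂ :=
  Matrix.of fun a b => if (b:ℕ) = (a:ℕ) + k then w (a:ℕ) else 0

lemma extM_SL (k : ℕ) (w : ℕ → ℂ) (a b : ℕ) :
    extM (SL r k w) a b = if a = b + k ∧ a < r then w b else 0 := by
  by_cases h : a < r ∧ b < r
  · rw [extM_apply _ h.1 h.2]
    simp only [SL, Matrix.of_apply]
    by_cases h2 : a = b + k
    · rw [if_pos h2, if_pos ⟨h2, h.1⟩]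
    · rw [if_neg h2, if_neg (by tauto)]
  · rw [extM, dif_neg h, if_neg (by omega)]

lemma extM_SU (k : ℕ) (w : ℕ → ℂ) (a b : ℕ) :
    extM (SU r k w) a b = if b = a + k ∧ b < r then w a else 0 := by
  by_cases h : a < r ∧ b < r
  · rw [extM_apply _ h.1 h.2]
    simp only [SU, Matrix.of_apply]
    by_cases h2 : b = a + k
    · rw [if_pos h2, if_pos ⟨h2, h.2⟩]
    · rw [if_neg h2, if_neg (by tauto)]
  · rw [extM, dif_neg h, if_neg (by omega)]

lemma mul_SL_apply (M : Matrix (Fin r) (Fin r) ℂ) (k : ℕ) (w : ℕ → ℂ) (a b : Fin r) :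
    (M * SL r k w) a b = extM M (a:ℕ) ((b:ℕ)+k) * w (b:ℕ) := by
  rw [Matrix.mul_apply]
  by_cases h : (b:ℕ)+k < r
  · rw [Finset.sum_eq_single (⟨(b:ℕ)+k, h⟩ : Fin r)]
    · rw [extM_apply M a.2 h]
      simp [SL]
    · intro c _ hc
      simp only [SL, Matrix.of_apply]
      rw [if_neg, mul_zero]
      intro hck
      exact hc (Fin.ext hck)
    · simp
  · rw [extM_zero_right M _ (by omega), zero_mul]
    apply Finset.sum_eq_zero
    intro c _
    simp only [SL, Matrix.of_apply]
    rw [if_neg (by omega), mul_zero]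

lemma SL_mul_apply (M : Matrix (Fin r) (Fin r) ℂ) (k : ℕ) (w : ℕ → ℂ) (a b : Fin r) :
    (SL r k w * M) a b = if k ≤ (a:ℕ) then w ((a:ℕ)-k) * extM M ((a:ℕ)-k) b else 0 := by
  rw [Matrix.mul_apply]
  by_cases h : k ≤ (a:ℕ)
  · rw [if_pos h]
    have hlt : (a:ℕ)-k < r := by omega
    rw [Finset.sum_eq_single (⟨(a:ℕ)-k, hlt⟩ : Fin r)]
    · rw [extM_apply M hlt b.2]
      simp only [SL, Matrix.of_apply]
      rw [if_pos (by omega)]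
    · intro c _ hc
      simp only [SL, Matrix.of_apply]
      rw [if_neg, zero_mul]
      intro hck
      exact hc (Fin.ext (by simp; omega))
    · simp
  · rw [if_neg h]
    apply Finset.sum_eq_zero
    intro c _
    simp only [SL, Matrix.of_apply]
    rw [if_neg (by omega), zero_mul]

lemma mul_SU_apply (M : Matrix (Fin r) (Fin r) ℂ) (k : ℕ) (w : ℕ → ℂ) (a b : Fin r) :
    (M * SU r k w) a b = if k ≤ (b:ℕ) then extM M (a:ℕ) ((b:ℕ)-k) * w ((b:ℕ)-k) else 0 := by
  rw [Matrix.mul_apply]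
  by_cases h : k ≤ (b:ℕ)
  · rw [if_pos h]
    have hlt : (b:ℕ)-k < r := by omega
    rw [Finset.sum_eq_single (⟨(b:ℕ)-k, hlt⟩ : Fin r)]
    · rw [extM_apply M a.2 hlt]
      simp only [SU, Matrix.of_apply]
      rw [if_pos (by omega)]
    · intro c _ hc
      simp only [SU, Matrix.of_apply]
      rw [if_neg, mul_zero]
      intro hck
      exact hc (Fin.ext (by simp; omega))
    · simp
  · rw [if_neg h]
    apply Finset.sum_eq_zero
    intro c _
    simp only [SU, Matrix.of_apply]
    rw [if_neg (by omega), mul_zero]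

lemma SU_mul_apply (M : Matrix (Fin r) (Fin r) ℂ) (k : ℕ) (w : ℕ → ℂ) (a b : Fin r) :
    (SU r k w * M) a b = w (a:ℕ) * extM M ((a:ℕ)+k) b := by
  rw [Matrix.mul_apply]
  by_cases h : (a:ℕ)+k < r
  · rw [Finset.sum_eq_single (⟨(a:ℕ)+k, h⟩ : Fin r)]
    · rw [extM_apply M h b.2]
      simp [SU]
    · intro c _ hc
      simp only [SU, Matrix.of_apply]
      rw [if_neg, zero_mul]
      intro hck
      exact hc (Fin.ext hck)
    · simp
  · rw [extM_zero_left M _ (by omega), mul_zero]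
    apply Finset.sum_eq_zero
    intro c _
    simp only [SU, Matrix.of_apply]
    rw [if_neg (by omega), zero_mul]

end TP

namespace TP
variable {r : ℕ}
open Matrix Finset

lemma trace_mul_SU (M : Matrix (Fin r) (Fin r) ℂ) (k : ℕ) (w : ℕ → ℂ) :
    (M * SU r k w).trace = ∑ b ∈ Finset.range (r-k), extM M (b+k) b * w b := by
  have h1 : (M * SU r k w).trace
      = ∑ a ∈ Finset.range r, (if k ≤ a then extM M a (a-k) * w (a-k) else 0) := by
    rw [Matrix.trace,
      ← Fin.sum_univ_eq_sum_range (fun a => if k ≤ a then extM M a (a-k) * w (a-k) else 0) r]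
    apply Finset.sum_congr rfl
    intro a _
    rw [Matrix.diag_apply, mul_SU_apply]
  rw [h1, ← Finset.sum_filter]
  have h2 : (Finset.range r).filter (fun a => k ≤ a) = Finset.Ico k r := by
    ext a; simp [Finset.mem_Ico, Finset.mem_filter]; omega
  rw [h2, Finset.sum_Ico_eq_sum_range]
  apply Finset.sum_congr rfl
  intro b _
  rw [Nat.add_sub_cancel_left, Nat.add_comm k b]

lemma trace_mul_SL (M : Matrix (Fin r) (Fin r) ℂ) (k : ℕ) (w : ℕ → ℂ) :
    (M * SL r k w).trace = ∑ b ∈ Finset.range (r-k), extM M b (b+k) * w b := by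
  have h1 : (M * SL r k w).trace = ∑ a ∈ Finset.range r, extM M a (a+k) * w a := by
    rw [Matrix.trace, ← Fin.sum_univ_eq_sum_range (fun a => extM M a (a+k) * w a) r]
    apply Finset.sum_congr rfl
    intro a _
    rw [Matrix.diag_apply, mul_SL_apply]
  rw [h1]
  symm
  apply Finset.sum_subset
  · exact Finset.range_subset_range.mpr (by omega)
  · intro a _ ha
    rw [Finset.mem_range] at ha
    rw [extM_zero_right M _ (by omega), zero_mul]

lemma fMat_eq : fMat r = SL r 1 (dC r) := by
  ext a b
  simp only [fMat, SL, dC, Matrix.of_apply]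
  by_cases h : (b:ℕ)+1 = (a:ℕ)
  · rw [if_pos h, if_pos h.symm]
  · rw [if_neg h, if_neg (by omega)]

lemma L2_eq : L2Mat r = SU r 1 (fun _ => 1) := by
  ext a b
  simp only [L2Mat, SU, Matrix.of_apply]
  by_cases h : (a:ℕ)+1 = (b:ℕ)
  · rw [if_pos h, if_pos h.symm]
  · rw [if_neg h, if_neg (by omega)]

lemma LMat_eq (k : ℕ) : LMat r (k+1) = SU r k (fun _ => 1) := by
  ext a b
  simp only [LMat, SU, Matrix.of_apply, Nat.add_sub_cancel]

end TP

namespace TP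
variable {r : ℕ}
open Matrix Finset

/-- G commutes with f -/
lemma G_comm_f (k : ℕ) : SL r k (gC r k) * fMat r = fMat r * SL r k (gC r k) := by
  rw [fMat_eq]
  ext a b
  rw [mul_SL_apply, SL_mul_apply, extM_SL]
  by_cases h : (a:ℕ) = (b:ℕ) + 1 + k
  · rw [if_pos ⟨h, a.2⟩, if_pos (by omega)]
    rw [extM_SL, if_pos ⟨by omega, by omega⟩]
    have hb : (b:ℕ) + 1 ≠ r := by have := a.2; omega
    rw [show (a:ℕ) - 1 = (b:ℕ) + k from by omega, gC_succ]
    have hdb := dC_ne_zero hb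
    field_simp
  · rw [if_neg (by tauto)]
    by_cases h1 : 1 ≤ (a:ℕ)
    · rw [if_pos h1, extM_SL, if_neg (by omega), mul_zero, zero_mul]
    · rw [if_neg h1, zero_mul]

/-- upper shifts commute -/
lemma SU_comm (k : ℕ) : SU r k 1 * SU r 1 1 = SU r 1 1 * SU r k 1 := by
  ext a b
  rw [mul_SU_apply, SU_mul_apply, extM_SU, extM_SU]
  simp only [Pi.one_apply, mul_one, one_mul]
  have hb := b.2
  by_cases h : (b:ℕ) = (a:ℕ) + k + 1
  · rw [if_pos (show 1 ≤ (b:ℕ) by omega), if_pos (show (b:ℕ)-1 = (a:ℕ)+k ∧ (b:ℕ)-1 < r by omega),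
      if_pos (show (b:ℕ) = (a:ℕ)+1+k ∧ (b:ℕ) < r by omega)]
  · by_cases h1 : 1 ≤ (b:ℕ)
    · rw [if_pos h1, if_neg (by omega), if_neg (by omega)]
    · rw [if_neg h1, if_neg (by omega)]

lemma LMat_comm_L2 (k : ℕ) : LMat r (k+1) * L2Mat r = L2Mat r * LMat r (k+1) := by
  rw [LMat_eq, L2_eq]; exact SU_comm k

section Yrel
variable {Y : Matrix (Fin r) (Fin r) ℂ} (hY : Y * fMat r = fMat r * Y)
include hY

lemma relY : ∀ a b : ℕ, dC r b * extM Y (a+1) (b+1) = dC r a * extM Y a b := by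
  intro a b
  by_cases ha : a + 1 < r
  · by_cases hb : b < r
    · have h : (Y * SL r 1 (dC r)) ⟨a+1, ha⟩ ⟨b, hb⟩ = (SL r 1 (dC r) * Y) ⟨a+1, ha⟩ ⟨b, hb⟩ := by
        rw [← fMat_eq, hY]
      rw [mul_SL_apply, SL_mul_apply] at h
      simp only [show ((⟨a+1, ha⟩ : Fin r):ℕ) = a+1 from rfl,
        show ((⟨b, hb⟩ : Fin r):ℕ) = b from rfl] at h
      rw [if_pos (by omega), Nat.add_sub_cancel] at h
      rw [mul_comm (dC r b) _, h]
    · rw [extM_zero_right Y _ (by omega), extM_zero_right Y _ (by omega), mul_zero, mul_zero]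
  · rw [extM_zero_left Y _ (by omega), mul_zero]
    by_cases ha2 : a < r
    · rw [dC_eq_zero (by omega), zero_mul]
    · rw [extM_zero_left Y _ (by omega), mul_zero]

lemma relY0 (hr : 0 < r) : ∀ b : ℕ, dC r b * extM Y 0 (b+1) = 0 := by
  intro b
  by_cases hb : b < r
  · have h : (Y * SL r 1 (dC r)) ⟨0, hr⟩ ⟨b, hb⟩ = (SL r 1 (dC r) * Y) ⟨0, hr⟩ ⟨b, hb⟩ := by
      rw [← fMat_eq, hY]
    rw [mul_SL_apply, SL_mul_apply] at h
    simp only [show ((⟨0, hr⟩ : Fin r):ℕ) = 0 from rfl,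
      show ((⟨b, hb⟩ : Fin r):ℕ) = b from rfl] at h
    rw [if_neg (by omega)] at h
    rw [mul_comm, h]
  · rw [extM_zero_right Y _ (by omega), mul_zero]

lemma Ydiag : ∀ b k : ℕ, extM Y (b+k) b = gC r k b * extM Y k 0 := by
  intro b
  induction b with
  | zero => intro k; simp [gC]
  | succ b ih =>
    intro k
    have h2 := relY hY (b+k) b
    rw [ih k] at h2
    by_cases hb : b + 1 = r
    · rw [show b+1+k = b+k+1 from by omega, extM_zero_left Y _ (by omega)]
      have : gC r k (b+1) = 0 := by
        apply Finset.prod_eq_zero (Finset.self_mem_range_succ b)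
        rw [dC_eq_zero hb, div_zero]
      rw [this, zero_mul]
    · have hdb : dC r b ≠ 0 := dC_ne_zero hb
      rw [show b+1+k = b+k+1 from by omega, gC_succ]
      field_simp
      linear_combination h2

lemma Yupper (hr : 0 < r) : ∀ a b : ℕ, a < b → extM Y a b = 0 := by
  intro a
  induction a with
  | zero =>
    intro b hb
    by_cases hbr : b < r
    · obtain ⟨c, rfl⟩ : ∃ c, b = c + 1 := ⟨b - 1, by omega⟩
      have h := relY0 hY hr c
      have hdc : dC r c ≠ 0 := dC_ne_zero (by omega)
      exact (mul_eq_zero.mp h).resolve_left hdc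
    · exact extM_zero_right Y _ (by omega)
  | succ a ih =>
    intro b hb
    by_cases hbr : b < r
    · obtain ⟨c, rfl⟩ : ∃ c, b = c + 1 := ⟨b - 1, by omega⟩
      have h := relY hY a c
      rw [ih c (by omega), mul_zero] at h
      have hdc : dC r c ≠ 0 := dC_ne_zero (by omega)
      exact (mul_eq_zero.mp h).resolve_left hdc
    · exact extM_zero_right Y _ (by omega)

lemma Yzero (hr : 0 < r) (h0 : ∀ k : ℕ, k < r → extM Y k 0 = 0) : Y = 0 := by
  ext a b
  rw [← extM_fin Y a b]
  rcases lt_or_ge (a:ℕ) (b:ℕ) with h | h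
  · rw [Yupper hY hr _ _ h]; rfl
  · have : (a:ℕ) = (b:ℕ) + ((a:ℕ) - (b:ℕ)) := by omega
    rw [this, Ydiag hY, h0 _ (by omega), mul_zero]; rfl

lemma traceYL (k : ℕ) : (Y * LMat r (k+1)).trace = SC r k * extM Y k 0 := by
  rw [LMat_eq, trace_mul_SU]
  have : ∀ b ∈ Finset.range (r-k), extM Y (b+k) b * (fun _ : ℕ => (1:ℂ)) b
      = gC r k b * extM Y k 0 := by
    intro b _
    rw [Ydiag hY, mul_one]
  rw [Finset.sum_congr rfl this, ← Finset.sum_mul, SC]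

lemma Ainj (hr : 0 < r) (ht : ∀ j : Fin r, (Y * LMat r ((j:ℕ)+1)).trace = 0) : Y = 0 := by
  apply Yzero hY hr
  intro k hk
  have h := ht ⟨k, hk⟩
  rw [traceYL hY] at h
  exact (mul_eq_zero.mp h).resolve_left (SC_ne_zero hk)

end Yrel

section Xrel
variable {X : Matrix (Fin r) (Fin r) ℂ} (hX : X * L2Mat r = L2Mat r * X)
include hX

lemma relX (a b : Fin r) :
    (if 1 ≤ (b:ℕ) then extM X (a:ℕ) ((b:ℕ)-1) else 0) = extM X ((a:ℕ)+1) (b:ℕ) := by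
  have h : (X * SU r 1 (fun _ => 1)) a b = (SU r 1 (fun _ => 1) * X) a b := by
    rw [← L2_eq, hX]
  rw [mul_SU_apply, SU_mul_apply] at h
  simp only [mul_one, one_mul] at h
  exact h

lemma factX1 {a b : ℕ} (ha : a < r) (hb : b + 1 < r) :
    extM X a b = extM X (a+1) (b+1) := by
  have h := relX hX ⟨a, ha⟩ ⟨b+1, hb⟩
  simpa using h

lemma factX3 {b : ℕ} (hb : b + 1 < r) : extM X (r-1) b = 0 := by
  have hr1 : r - 1 < r := by omega
  have h := relX hX ⟨r-1, hr1⟩ ⟨b+1, hb⟩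
  simp only [show ((⟨r-1, hr1⟩ : Fin r):ℕ) = r-1 from rfl,
    show ((⟨b+1, hb⟩ : Fin r):ℕ) = b+1 from rfl] at h
  rw [if_pos (by omega), Nat.add_sub_cancel] at h
  rw [h, extM_zero_left X _ (by omega)]

lemma Xdiag : ∀ a k : ℕ, a + k < r → extM X a (a+k) = extM X 0 k := by
  intro a
  induction a with
  | zero => intro k _; rw [Nat.zero_add]
  | succ a ih =>
    intro k h
    rw [show a+1+k = (a+k)+1 from by omega, ← factX1 hX (by omega) (by omega)]
    exact ih k (by omega)

lemma Xlow : ∀ j a b : ℕ, b < a → r ≤ a + j + 1 → extM X a b = 0 := by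
  intro j
  induction j with
  | zero =>
    intro a b hab har
    rcases lt_or_ge a r with h | h
    · have : a = r - 1 := by omega
      subst this
      exact factX3 hX (by omega)
    · exact extM_zero_left X _ h
  | succ j ih =>
    intro a b hab har
    by_cases h : r ≤ a + j + 1
    · exact ih a b hab h
    · rcases lt_or_ge a r with h2 | h2
      · rw [factX1 hX h2 (by omega)]
        exact ih (a+1) (b+1) (by omega) (by omega)
      · exact extM_zero_left X _ h2

lemma traceXG (k : ℕ) (hk : k < r) :
    (X * SL r k (gC r k)).trace = SC r k * extM X 0 k := by
  rw [trace_mul_SL]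
  have : ∀ b ∈ Finset.range (r-k), extM X b (b+k) * gC r k b
      = gC r k b * extM X 0 k := by
    intro b hb
    rw [Finset.mem_range] at hb
    rw [Xdiag hX b k (by omega), mul_comm]
  rw [Finset.sum_congr rfl this, ← Finset.sum_mul, SC]

lemma Binj (ht : ∀ k : ℕ, k < r → (X * SL r k (gC r k)).trace = 0) : X = 0 := by
  ext a b
  rw [← extM_fin X a b]
  rcases lt_or_ge (b:ℕ) (a:ℕ) with h | h
  · rw [Xlow hX r _ _ h (by omega)]; rfl
  · have hd : extM X 0 ((b:ℕ) - (a:ℕ)) = 0 := by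
      have h2 := ht ((b:ℕ) - (a:ℕ)) (by have := b.2; omega)
      rw [traceXG hX _ (by have := b.2; omega)] at h2
      exact (mul_eq_zero.mp h2).resolve_left (SC_ne_zero (by have := b.2; omega))
    have : (b:ℕ) = (a:ℕ) + ((b:ℕ) - (a:ℕ)) := by omega
    rw [this, Xdiag hX _ _ (by have := b.2; omega), hd]; rfl

end Xrel
end TP

namespace TP
variable {r : ℕ}
open Matrix Finset

lemma gC_zero (k : ℕ) : gC r k 0 = 1 := by simp [gC]

lemma trace_sum_smul (γ : Fin r → Matrix (Fin r) (Fin r) ℂ) (c : Fin r → ℂ)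
    (htr : ∀ i j : Fin r, (γ i * LMat r ((j:ℕ)+1)).trace = if i = j then 1 else 0) (j : Fin r) :
    ((∑ i, c i • γ i) * LMat r ((j:ℕ)+1)).trace = c j := by
  rw [Finset.sum_mul, Matrix.trace_sum]
  have h : ∀ i ∈ (univ : Finset (Fin r)),
      ((c i • γ i) * LMat r ((j:ℕ)+1)).trace = c i * (if i = j then 1 else 0) := by
    intro i _
    rw [smul_mul_assoc, Matrix.trace_smul, htr, smul_eq_mul]
  rw [Finset.sum_congr rfl h]
  simp

lemma traceGL (hr : 0 < r) (i j : Fin r) :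
    (((TP.SC r (i:ℕ))⁻¹ • TP.SL r (i:ℕ) (TP.gC r (i:ℕ))) * LMat r ((j:ℕ)+1)).trace
      = if i = j then 1 else 0 := by
  rw [Matrix.smul_mul, Matrix.trace_smul, TP.traceYL (TP.G_comm_f (i:ℕ)) (j:ℕ),
    TP.extM_SL, smul_eq_mul, TP.gC_zero]
  by_cases h : i = j
  · subst h
    rw [if_pos (show (i:ℕ) = 0 + (i:ℕ) ∧ (i:ℕ) < r from ⟨by omega, i.2⟩), mul_one,
      if_pos rfl, inv_mul_cancel₀ (TP.SC_ne_zero i.2)]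
  · rw [if_neg, if_neg h, mul_zero, mul_zero]
    rintro ⟨hc1, -⟩
    exact h (Fin.ext (by omega))

lemma sum_smul_comm_f (γ : Fin r → Matrix (Fin r) (Fin r) ℂ) (c : Fin r → ℂ)
    (hcomm : ∀ i, γ i * fMat r = fMat r * γ i) :
    (∑ i, c i • γ i) * fMat r = fMat r * ∑ i, c i • γ i := by
  rw [Finset.sum_mul, Finset.mul_sum]
  apply Finset.sum_congr rfl
  intro i _
  rw [smul_mul_assoc, mul_smul_comm, hcomm i]

end TP
/-- the trace pairing between the centralizer of `L₂` and the
centralizer of `f` is nondegenerate; consequently there is a unique family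
`γ₁, …, γ_r` of matrices commuting with `f` with `Tr(γ_i L_j) = δ_{ij}`, and
any such family is a basis of the centralizer of `f`. -/
theorem trace_pairing_nondegenerate_and_dual_basis (r : ℕ) (hr : 1 ≤ r) :
    ((∀ X : Matrix (Fin r) (Fin r) ℂ, X * L2Mat r = L2Mat r * X →
        (∀ Y : Matrix (Fin r) (Fin r) ℂ, Y * fMat r = fMat r * Y → (X * Y).trace = 0) →
        X = 0) ∧
     (∀ Y : Matrix (Fin r) (Fin r) ℂ, Y * fMat r = fMat r * Y →
        (∀ X : Matrix (Fin r) (Fin r) ℂ, X * L2Mat r = L2Mat r * X → (X * Y).trace = 0) →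
        Y = 0)) ∧
    (∃! γ : Fin r → Matrix (Fin r) (Fin r) ℂ,
        (∀ i, γ i * fMat r = fMat r * γ i) ∧
        (∀ i j : Fin r, (γ i * LMat r ((j : ℕ) + 1)).trace = if i = j then 1 else 0)) ∧
    (∀ γ : Fin r → Matrix (Fin r) (Fin r) ℂ,
        (∀ i, γ i * fMat r = fMat r * γ i) →
        (∀ i j : Fin r, (γ i * LMat r ((j : ℕ) + 1)).trace = if i = j then 1 else 0) →
        LinearIndependent ℂ γ ∧
        (↑(Submodule.span ℂ (Set.range γ)) =
          {Y : Matrix (Fin r) (Fin r) ℂ | Y * fMat r = fMat r * Y})) := by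
  classical
  have hr0 : 0 < r := hr
  refine ⟨⟨?_, ?_⟩, ?_, ?_⟩
  · -- nondegeneracy in X
    intro X hX hp
    apply TP.Binj hX
    intro k hk
    exact hp _ (TP.G_comm_f k)
  · -- nondegeneracy in Y
    intro Y hY hp
    apply TP.Ainj hY hr0
    intro j
    rw [Matrix.trace_mul_comm]
    exact hp _ (TP.LMat_comm_L2 (j:ℕ))
  · -- existence and uniqueness of the dual family
    refine ⟨fun i => (TP.SC r (i:ℕ))⁻¹ • TP.SL r (i:ℕ) (TP.gC r (i:ℕ)), ⟨?_, ?_⟩, ?_⟩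
    · intro i
      rw [Matrix.smul_mul, Matrix.mul_smul, TP.G_comm_f]
    · intro i j
      exact TP.traceGL hr0 i j
    · -- uniqueness
      intro γ' ⟨hcomm, htr⟩
      funext i
      have hsub : (γ' i - (TP.SC r (i:ℕ))⁻¹ • TP.SL r (i:ℕ) (TP.gC r (i:ℕ))) = 0 := by
        apply TP.Ainj _ hr0
        · intro j
          rw [Matrix.sub_mul, Matrix.trace_sub, htr, TP.traceGL hr0 i j, sub_self]
        · rw [Matrix.sub_mul, Matrix.mul_sub, hcomm, Matrix.smul_mul, Matrix.mul_smul,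
            TP.G_comm_f]
      rw [sub_eq_zero] at hsub
      exact hsub
  · -- any dual family is a basis of the centralizer of f
    intro γ hcomm htr
    constructor
    · rw [Fintype.linearIndependent_iff]
      intro c hc j
      have h1 := TP.trace_sum_smul γ c htr j
      rw [hc, Matrix.zero_mul, Matrix.trace_zero] at h1
      exact h1.symm
    · apply Set.Subset.antisymm
      · intro Y hY
        induction hY using Submodule.span_induction with
        | mem x hx =>
          obtain ⟨i, rfl⟩ := hx
          exact hcomm i
        | zero => simp [Set.mem_setOf_eq]
        | add x y hx hy hx' hy' =>
          show (x + y) * fMat r = fMat r * (x + y)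
          rw [Matrix.add_mul, Matrix.mul_add, hx', hy']
        | smul a x hx hx' =>
          show (a • x) * fMat r = fMat r * (a • x)
          rw [Matrix.smul_mul, Matrix.mul_smul, hx']
      · intro Y hYf
        have hYf' : Y * fMat r = fMat r * Y := hYf
        have hZ : Y - ∑ j : Fin r, ((Y * LMat r ((j:ℕ)+1)).trace) • γ j = 0 := by
          apply TP.Ainj _ hr0
          · intro k
            rw [Matrix.sub_mul, Matrix.trace_sub,
              TP.trace_sum_smul γ _ htr k, sub_self]
          · rw [Matrix.sub_mul, Matrix.mul_sub, hYf',
              TP.sum_smul_comm_f γ _ hcomm]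
        rw [sub_eq_zero] at hZ
        rw [hZ]
        exact Submodule.sum_mem _ fun j _ =>
          Submodule.smul_mem _ _ (Submodule.subset_span (Set.mem_range_self j))
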